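/- For a smooth manifold M, every ℝ-algebra homomorphism φ : C^∞(M) → ℝ is evaluation at some point x ∈ M (Milnor's exercise), provided M is compact (or more generally, assuming φ is nonzero and M admits a proper smooth function). -/

import Mathlib

open scoped Manifold

/-!
If `φ` were evaluation at no point, then for every `x` some `f` has `f x ≠ φ f`, so
`f - φ f` lies in `ker φ` and does not vanish at `x`. By compactness finitely many such functions
have no common zero, and the sum of their squares is a nowhere-vanishing element of `ker φ`.
Its reciprocal is again smooth, so `ker φ` contains a unit, which is absurd since `φ 1 = 1`.
-/

namespace ContMDiffMap

variable {𝕜 : Type*} [NontriviallyNormedField 𝕜]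
  {E : Type*} [NormedAddCommGroup E] [NormedSpace 𝕜 E]
  {H : Type*} [TopologicalSpace H] {I : ModelWithCorners 𝕜 E H}
  {M : Type*} [TopologicalSpace M] [ChartedSpace H M] {n : WithTop ℕ∞}

theorem isUnit_of_forall_ne_zero {f : C^n⟮I, M; 𝕜⟯} (hf : ∀ x, f x ≠ 0) : IsUnit f := by
  let g : C^n⟮I, M; 𝕜⟯ := ⟨fun x ↦ (f x)⁻¹, f.contMDiff.inv₀ hf⟩
  refine IsUnit.of_mul_eq_one g ?_
  ext x
  exact mul_inv_cancel₀ (hf x)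

end ContMDiffMap

section CompactManifold

variable {E : Type*} [NormedAddCommGroup E] [NormedSpace ℝ E]
  {H : Type*} [TopologicalSpace H] {I : ModelWithCorners ℝ E H}
  {M : Type*} [TopologicalSpace M] [ChartedSpace H M] [CompactSpace M] {n : WithTop ℕ∞}

theorem Ideal.eq_top_of_forall_exists_apply_ne_zero {J : Ideal C^n⟮I, M; ℝ⟯}
    (hJ : ∀ x, ∃ g ∈ J, g x ≠ 0) : J = ⊤ := by
  choose g hgJ hgx using hJ
  obtain ⟨t, ht⟩ := isCompact_univ.elim_finite_subcover (fun x ↦ {y | g x y ≠ 0})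
    (fun x ↦ isOpen_ne_fun (g x).contMDiff.continuous continuous_const)
    (fun y _ ↦ Set.mem_iUnion.2 ⟨y, hgx y⟩)
  let h : C^n⟮I, M; ℝ⟯ := ∑ i ∈ t, g i * g i
  have h_mem : h ∈ J := J.sum_mem fun i _ ↦ J.mul_mem_left _ (hgJ i)
  have h_pos : ∀ y, 0 < h y := by
    intro y
    obtain ⟨i, hi, hyi⟩ := Set.mem_iUnion₂.1 (ht (Set.mem_univ y))
    rw [show h y = ∑ i ∈ t, g i y * g i y from map_sum (ContMDiffMap.evalRingHom y) _ t]
    exact Finset.sum_pos' (fun j _ ↦ mul_self_nonneg _) ⟨i, hi, mul_self_pos.2 hyi⟩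
  exact J.eq_top_of_isUnit_mem h_mem
    (ContMDiffMap.isUnit_of_forall_ne_zero fun y ↦ (h_pos y).ne')

theorem ContMDiffMap.exists_eq_eval_of_algHom (φ : C^n⟮I, M; ℝ⟯ →ₐ[ℝ] ℝ) :
    ∃ x : M, ∀ f : C^n⟮I, M; ℝ⟯, φ f = f x := by
  by_contra! hφ
  refine RingHom.ker_ne_top φ (Ideal.eq_top_of_forall_exists_apply_ne_zero fun x ↦ ?_)
  obtain ⟨f, hf⟩ := hφ x
  refine ⟨f - algebraMap ℝ _ (φ f), ?_, sub_ne_zero.2 hf.symm⟩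
  simp [RingHom.mem_ker]

end CompactManifold

theorem milnor_exercise_general
    {E : Type*} [NormedAddCommGroup E] [NormedSpace ℝ E]
    {H : Type*} [TopologicalSpace H] (I : ModelWithCorners ℝ E H)
    (M : Type*) [TopologicalSpace M] [ChartedSpace H M]
    [CompactSpace M]
    (φ : C^(⊤ : ℕ∞)⟮I, M; ℝ⟯ →ₐ[ℝ] ℝ) :
    ∃ x : M, ∀ f : C^(⊤ : ℕ∞)⟮I, M; ℝ⟯, φ f = f x :=
  ContMDiffMap.exists_eq_eval_of_algHom φ

/-- Milnor's exercise: on a compact smooth manifold `M`, every nonzero `ℝ`-algebra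
homomorphism `φ : C^∞(M) → ℝ` is evaluation at some point `x ∈ M`. -/
theorem milnor_exercise
    {E : Type*} [NormedAddCommGroup E] [NormedSpace ℝ E]
    {H : Type*} [TopologicalSpace H] (I : ModelWithCorners ℝ E H)
    (M : Type*) [TopologicalSpace M] [ChartedSpace H M]
    [IsManifold I (⊤ : ℕ∞) M] [CompactSpace M]
    (φ : C^(⊤ : ℕ∞)⟮I, M; ℝ⟯ →ₐ[ℝ] ℝ) (hφ : ∃ f, φ f ≠ 0) :
    ∃ x : M, ∀ f : C^(⊤ : ℕ∞)⟮I, M; ℝ⟯, φ f = f x :=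
  milnor_exercise_general I M φ
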